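/- arXiv:2307.03792 — 2 statements merged into one kernel-verified Lean document; each statement's English description precedes it below -/
import Mathlib

section
/- For all integers l ≥ 2 and m ≥ 2l−1, the Eulerian numbers satisfy A(m, l−1) ≤ c_{m+1, m−2l+1} · A(m, l), where c_{n,r} = ((n−r−2)(n−r)(n−r+2))/((n+r)(n+r+2)(n+r+4)). -/
/-!
Pascal's rule and `(i + 1) C(n + 1, i + 1) = (n + 1) C(n, i)` turn the defining alternating sum
into the recurrence `A(m+1, l+1) = (l+1) A(m, l+1) + (m+1-l) A(m, l)`, from which the `A(m, l)`
are nonnegative and symmetric, `A(m, l) = A(m, m+1-l)`.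

Since `c_{m+1, m-2l+1} = (l-1) l (l+1) / ((m-l+1)(m-l+2)(m-l+3))`, the claim is
`(m-l)(m-l+1)(m-l+2) A(m, l) ≤ l(l+1)(l+2) A(m, l+1)` for `2l+1 ≤ m` (after `l ↦ l+1`), and this
propagates along the recurrence by induction on `m`: the inequalities at `(m, l)` and `(m, l+1)`
give the one at `(m+1, l+1)` up to the nonnegative term `(m-2l-2)(m-2l-1)(m-2l) A(m, l+1)`. At
`m = 2l+2` the inequality at `(m, l+1)` is not available, but there it is an equality by symmetry.
-/

open MeasureTheory Real

/-- The unnormalized sine cardinal function. -/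
noncomputable def sinc (t : ℝ) : ℝ := if t = 0 then 1 else Real.sin t / t

/-- The Laplace–Pólya integral `J_n(r)`. -/
noncomputable def J (n : ℕ) (r : ℝ) : ℝ :=
  (1 / Real.pi) * ∫ t : ℝ, _root_.sinc t ^ n * Real.cos (r * t)

/-- The Eulerian numbers of the first kind,
`A(m,l) = ∑_{i=0}^{l} (-1)^i C(m+1,i) (l-i)^m`. -/
def eulerianA (m l : ℕ) : ℤ :=
  ∑ i ∈ Finset.range (l + 1), (-1) ^ i * (Nat.choose (m + 1) i : ℤ) * ((l : ℤ) - i) ^ m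

open Finset

def altChooseSum {R : Type*} [CommRing R] (n l : ℕ) (f : ℤ → R) : R :=
  ∑ i ∈ range (l + 1), (-1) ^ i * (n.choose i : R) * f (l - i)

namespace altChooseSum

variable {R : Type*} [CommRing R] (f : ℤ → R)

theorem zero_left (l : ℕ) : altChooseSum 0 l f = f l := by
  simp [altChooseSum, sum_range_succ']

theorem succ_right (n l : ℕ) :
    altChooseSum n (l + 1) f =
      f (l + 1) + ∑ i ∈ range (l + 1), (-1) ^ (i + 1) * (n.choose (i + 1) : R) * f (l - i) := by
  rw [altChooseSum, sum_range_succ', add_comm]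
  push_cast
  simp only [add_sub_add_right_eq_sub, sub_zero, pow_zero, Nat.choose_zero_right, Nat.cast_one,
    one_mul]

theorem succ_succ (n l : ℕ) :
    altChooseSum (n + 1) (l + 1) f = altChooseSum n (l + 1) f - altChooseSum n l f := by
  rw [succ_right, succ_right, altChooseSum, add_sub_assoc, ← sum_sub_distrib]
  congr 1
  refine sum_congr rfl fun i _ ↦ ?_
  rw [Nat.choose_succ_succ']
  push_cast
  ring

theorem mul_succ (n l : ℕ) :
    altChooseSum (n + 1) (l + 1) (fun x ↦ (x : R) * f x) =
      (l + 1) * altChooseSum (n + 1) (l + 1) f + (n + 1) * altChooseSum n l f := by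
  rw [succ_right, succ_right, altChooseSum, mul_add, add_assoc, mul_sum, mul_sum, ← sum_add_distrib]
  push_cast
  congr 1
  refine sum_congr rfl fun i _ ↦ ?_
  have h := congrArg (Nat.cast : ℕ → R) (Nat.add_one_mul_choose_eq n i)
  push_cast at h
  linear_combination -(-1) ^ i * f (l - i) * h

end altChooseSum

theorem eulerianA_eq_altChooseSum (m l : ℕ) :
    eulerianA m l = altChooseSum (m + 1) l (· ^ m) := rfl

theorem eulerianA_succ_succ (m l : ℕ) :
    eulerianA (m + 1) (l + 1) = (l + 1) * eulerianA m (l + 1) + (m + 1 - l) * eulerianA m l := by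
  have h := altChooseSum.mul_succ (fun x : ℤ ↦ x ^ m) (m + 1) l
  simp only [Int.cast_id, ← pow_succ'] at h
  simp only [eulerianA_eq_altChooseSum, h, altChooseSum.succ_succ]
  push_cast
  ring

theorem eulerianA_succ_zero (m : ℕ) : eulerianA (m + 1) 0 = 0 := by
  simp [eulerianA]

theorem eulerianA_zero_succ (l : ℕ) : eulerianA 0 (l + 1) = 0 := by
  simp [eulerianA_eq_altChooseSum, altChooseSum.succ_succ, altChooseSum.zero_left]

theorem eulerianA_eq_zero_of_lt {m l : ℕ} (h : m < l) : eulerianA m l = 0 := by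
  induction m generalizing l with
  | zero =>
    obtain ⟨j, rfl⟩ : ∃ j, l = j + 1 := ⟨l - 1, by omega⟩
    exact eulerianA_zero_succ j
  | succ m ih =>
    obtain ⟨j, rfl⟩ : ∃ j, l = j + 1 := ⟨l - 1, by omega⟩
    rw [eulerianA_succ_succ, ih (by omega), ih (by omega), mul_zero, mul_zero, add_zero]

theorem eulerianA_nonneg (m l : ℕ) : 0 ≤ eulerianA m l := by
  induction m generalizing l with
  | zero =>
    cases l with
    | zero => decide
    | succ l => rw [eulerianA_zero_succ]
  | succ m ih =>
    cases l with
    | zero => rw [eulerianA_succ_zero]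
    | succ l =>
      have hlow : 0 ≤ ((m : ℤ) + 1 - l) * eulerianA m l := by
        rcases le_or_gt l m with hl | hl
        · exact mul_nonneg (by omega) (ih l)
        · rw [eulerianA_eq_zero_of_lt hl, mul_zero]
      rw [eulerianA_succ_succ]
      exact add_nonneg (mul_nonneg (by positivity) (ih (l + 1))) hlow

theorem eulerianA_symm {m l k : ℕ} (hm : 1 ≤ m) (h : l + k = m + 1) :
    eulerianA m l = eulerianA m k := by
  induction m, hm using Nat.le_induction generalizing l k with
  | base =>
    have hl : l ≤ 2 := by omega
    obtain rfl : k = 2 - l := by omega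
    interval_cases l <;> rfl
  | succ m hm ih =>
    rcases l with _ | a
    · rw [eulerianA_succ_zero, eulerianA_eq_zero_of_lt (by omega)]
    rcases k with _ | b
    · rw [eulerianA_succ_zero, eulerianA_eq_zero_of_lt (by omega)]
    obtain rfl : m = a + b := by omega
    rw [eulerianA_succ_succ, eulerianA_succ_succ, ih (l := a + 1) (k := b) (by omega),
      ih (l := a) (k := b + 1) (by omega)]
    push_cast
    ring

theorem eulerianA_mul_le_mul_eulerianA_succ {m l : ℕ} (h : 2 * l + 1 ≤ m) :
    ((m : ℤ) - l) * (m - l + 1) * (m - l + 2) * eulerianA m l ≤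
      l * (l + 1) * (l + 2) * eulerianA m (l + 1) := by
  induction m generalizing l with
  | zero => omega
  | succ m ih =>
    rcases l with _ | j
    · simp [eulerianA_succ_zero]
    rw [eulerianA_succ_succ, eulerianA_succ_succ]
    have hr := ih (l := j) (by omega)
    have hq : ((m : ℤ) - j - 1) * (m - j) * (m - j + 1) * eulerianA m (j + 1) ≤
        (j + 1) * (j + 2) * (j + 3) * eulerianA m (j + 2) := by
      rcases (by omega : 2 * j + 3 ≤ m ∨ m = 2 * j + 2) with hm | rfl
      · have := ih (l := j + 1) (by omega)
        push_cast at this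
        linarith
      · rw [eulerianA_symm (by omega) (by omega : j + 2 + (j + 1) = 2 * j + 2 + 1)]
        push_cast
        exact le_of_eq (by ring)
    have hgap : 0 ≤ ((m : ℤ) - 2 * j - 2) * (m - 2 * j - 1) * (m - 2 * j) * eulerianA m (j + 1) :=
      mul_nonneg (mul_nonneg (mul_nonneg (by omega) (by omega)) (by omega)) (eulerianA_nonneg _ _)
    have hq' := mul_le_mul_of_nonneg_left hq (by positivity : (0 : ℤ) ≤ j + 2)
    have hr' := mul_le_mul_of_nonneg_left hr (by omega : (0 : ℤ) ≤ m + 1 - j)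
    push_cast
    linarith

theorem stmt_4 (m l : ℕ) (hl : 2 ≤ l) (hm : 2 * (l : ℤ) - 1 ≤ (m : ℤ)) :
    (eulerianA m (l - 1) : ℝ) ≤
      ((((m : ℝ) + 1) - ((m : ℝ) - 2 * l + 1) - 2) * (((m : ℝ) + 1) - ((m : ℝ) - 2 * l + 1)) *
          (((m : ℝ) + 1) - ((m : ℝ) - 2 * l + 1) + 2)) /
        ((((m : ℝ) + 1) + ((m : ℝ) - 2 * l + 1)) * (((m : ℝ) + 1) + ((m : ℝ) - 2 * l + 1) + 2) *
          (((m : ℝ) + 1) + ((m : ℝ) - 2 * l + 1) + 4)) *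
        (eulerianA m l : ℝ) := by
  obtain ⟨k, rfl⟩ : ∃ k, l = k + 1 := ⟨l - 1, by omega⟩
  have hk : (2 * k + 1 : ℝ) ≤ m := by exact_mod_cast (by omega : 2 * k + 1 ≤ m)
  have key : ((m : ℝ) - k) * (m - k + 1) * (m - k + 2) * eulerianA m k ≤
      k * (k + 1) * (k + 2) * eulerianA m (k + 1) := by
    exact_mod_cast eulerianA_mul_le_mul_eulerianA_succ (by omega : 2 * k + 1 ≤ m)
  rw [Nat.add_sub_cancel, div_mul_eq_mul_div,
    le_div_iff₀ (by push_cast; apply mul_pos (mul_pos _ _) _ <;> linarith)]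
  push_cast
  linarith
end

section
/- For all integers l ≥ 2 and μ ≥ l+1, the strict inequality ((l−1)·l·(l+1))/((μ−1)·μ·(μ+1)) · ((μ−2)/μ)^l < ((μ−2)/μ)^μ holds. (Equivalently, for l ≥ 2 and m ≥ 2l−1, the bound c_{m+1,m−2l+1} = ((l−1)l(l+1))/((m−l+1)(m−l+2)(m−l+3)) is strictly smaller than the Lesieur–Nicolas bound ((m−l)/(m−l+2))^{m−2l+2}.) -/
open MeasureTheory Real

/-!
Write `x = (μ - 2)/μ` and `k = μ - l`. The ratio `(m - k)(m - k - 1) / (m(m - 1))` shrinks by a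
factor at most `x` each time `k` grows by one, so `x ^ k ≥ l(l - 1) / (μ(μ - 1))`. This exceeds
the coefficient `(l - 1)l(l + 1) / ((μ - 1)μ(μ + 1))` because `l < μ`; multiplying by `x ^ l`
gives the claim.
-/

theorem sub_mul_sub_sub_one_le_pow_sub_two_div_mul (k : ℕ) {m : ℝ} (hkm : (k : ℝ) + 2 ≤ m) :
    (m - k) * (m - k - 1) ≤ ((m - 2) / m) ^ k * (m * (m - 1)) := by
  induction k with
  | zero => simp
  | succ k ih =>
    push_cast at hkm ⊢
    have hm : 0 < m := by linarith [k.cast_nonneg (α := ℝ)]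
    -- `(m - 2)(m - k)(m - k - 1) - m(m - k - 1)(m - k - 2) = 2k(m - k - 1) ≥ 0`
    have hstep : (m - (k + 1)) * (m - (k + 1) - 1) ≤ (m - 2) / m * ((m - k) * (m - k - 1)) := by
      rw [div_mul_eq_mul_div, le_div_iff₀ hm]
      nlinarith [k.cast_nonneg (α := ℝ)]
    calc (m - (k + 1)) * (m - (k + 1) - 1)
        ≤ (m - 2) / m * ((m - k) * (m - k - 1)) := hstep
      _ ≤ (m - 2) / m * (((m - 2) / m) ^ k * (m * (m - 1))) :=
          mul_le_mul_of_nonneg_left (ih (by linarith)) (div_nonneg (by linarith) hm.le)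
      _ = ((m - 2) / m) ^ (k + 1) * (m * (m - 1)) := by ring

theorem stmt_12 (l μ : ℕ) (hl : 2 ≤ l) (hμ : l + 1 ≤ μ) :
    (((l : ℝ) - 1) * l * ((l : ℝ) + 1)) / (((μ : ℝ) - 1) * μ * ((μ : ℝ) + 1)) *
        (((μ : ℝ) - 2) / μ) ^ l <
      (((μ : ℝ) - 2) / μ) ^ μ := by
  have hl' : (2 : ℝ) ≤ l := by exact_mod_cast hl
  have hμ' : (l : ℝ) + 1 ≤ μ := by exact_mod_cast hμ
  set x := ((μ : ℝ) - 2) / μ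
  have hx : 0 < x := div_pos (by linarith) (by linarith)
  have hpow : (l : ℝ) * (l - 1) ≤ x ^ (μ - l) * (μ * (μ - 1)) := by
    have hcast : ((μ - l : ℕ) : ℝ) = μ - l := by rw [Nat.cast_sub (by omega)]
    have h := sub_mul_sub_sub_one_le_pow_sub_two_div_mul (μ - l) (m := μ) (by rw [hcast]; linarith)
    rw [hcast] at h
    linarith
  have hcoef : ((l : ℝ) - 1) * l * (l + 1) / ((μ - 1) * μ * (μ + 1)) < x ^ (μ - l) := by
    rw [div_lt_iff₀ (mul_pos (mul_pos (by linarith) (by linarith)) (by linarith))]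
    nlinarith [mul_pos (mul_pos (by linarith : (0 : ℝ) < l) (by linarith : (0 : ℝ) < l - 1))
      (by linarith : (0 : ℝ) < μ - l)]
  calc _ < x ^ (μ - l) * x ^ l := mul_lt_mul_of_pos_right hcoef (pow_pos hx l)
    _ = x ^ μ := by rw [← pow_add, Nat.sub_add_cancel (by omega)]
end
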